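/- Let n and P be positive natural numbers and let A_1, ..., A_P be real n×n matrices with ∑_{p=1}^P ‖A_p‖ < 1 in the operator norm. If y : ℕ → ℝ^n is a bounded sequence satisfying the homogeneous recursion y_t = ∑_{p=1}^P A_p y_{t-p} for all t ≥ P, then y_t → 0 as t → ∞. -/
import Mathlib


/-- Let `n, P > 0` and let `A 1, …, A P` be real `n × n` matrices (viewed as
continuous linear maps on `ℝ^n`, with the operator norm) such that `∑_{p=1}^P ‖A p‖ < 1`.
If `y : ℕ → ℝ^n` is a bounded sequence satisfying the homogeneous recursion
`y t = ∑_{p=1}^P A p (y (t - p))` for all `t ≥ P`, then `y t → 0` as `t → ∞`. -/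
theorem bounded_homogeneous_solution_tendsto_zero
    (n P : ℕ) (hn : 0 < n) (hP : 0 < P)
    (A : Fin P → (EuclideanSpace ℝ (Fin n) →L[ℝ] EuclideanSpace ℝ (Fin n)))
    (hA : ∑ p : Fin P, ‖A p‖ < 1)
    (y : ℕ → EuclideanSpace ℝ (Fin n))
    (hy : ∃ C : ℝ, ∀ t : ℕ, ‖y t‖ ≤ C)
    (hrec : ∀ t : ℕ, P ≤ t → y t = ∑ p : Fin P, A p (y (t - ((p : ℕ) + 1)))) :
    Filter.Tendsto y Filter.atTop (nhds 0) := by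
  obtain ⟨C, hC⟩ := hy
  set r : ℝ := ∑ p : Fin P, ‖A p‖ with hr
  have hr0 : 0 ≤ r := Finset.sum_nonneg fun p _ => norm_nonneg _
  have hC0 : 0 ≤ C := le_trans (norm_nonneg _) (hC 0)
  -- key bound by induction
  have key : ∀ k : ℕ, ∀ t : ℕ, k * P ≤ t → ‖y t‖ ≤ r ^ k * C := by
    intro k
    induction k with
    | zero => intro t _; simpa using hC t
    | succ k ih =>
      intro t ht
      have hPt : P ≤ t := le_trans (Nat.le_add_left P (k * P)) (by
        simpa [Nat.succ_mul] using ht)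
      rw [hrec t hPt]
      calc ‖∑ p : Fin P, A p (y (t - ((p : ℕ) + 1)))‖
          ≤ ∑ p : Fin P, ‖A p (y (t - ((p : ℕ) + 1)))‖ := norm_sum_le _ _
        _ ≤ ∑ p : Fin P, ‖A p‖ * (r ^ k * C) := by
            apply Finset.sum_le_sum
            intro p _
            refine le_trans ((A p).le_opNorm _) ?_
            apply mul_le_mul_of_nonneg_left _ (norm_nonneg _)
            apply ih
            have h1 : (p : ℕ) + 1 ≤ P := p.2
            rw [Nat.succ_mul] at ht
            omega
        _ = r ^ (k + 1) * C := by
            rw [← Finset.sum_mul, ← hr, pow_succ]; ring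
  -- squeeze
  have htend : Filter.Tendsto (fun t : ℕ => r ^ (t / P) * C) Filter.atTop (nhds 0) := by
    have h1 : Filter.Tendsto (fun t : ℕ => t / P) Filter.atTop Filter.atTop := by
      apply Filter.tendsto_atTop_atTop.2
      intro b
      exact ⟨P * b, fun a ha => (Nat.le_div_iff_mul_le hP).2 (by rw [Nat.mul_comm]; exact ha)⟩
    have h2 : Filter.Tendsto (fun k : ℕ => r ^ k) Filter.atTop (nhds 0) :=
      tendsto_pow_atTop_nhds_zero_of_lt_one hr0 hA
    simpa using (h2.comp h1).mul_const C
  rw [tendsto_zero_iff_norm_tendsto_zero]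
  refine squeeze_zero (fun t => norm_nonneg _) (fun t => key (t / P) t (Nat.div_mul_le_self t P)) htend
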